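/- arXiv:1711.10465 — 2 statements merged into one kernel-verified Lean document; each statement's English description precedes it below -/
import Mathlib

section
/- The ℓ1-contextuality distance is subadditive under independent juxtapositions: for behaviors B1 in a scenario S1 and B2 in a scenario S2, with NC(S1), NC(S2) and NC(S1 ⊗ S2) nonempty, one has D(B1 ⊗ B2) ≤ D(B1) + D(B2), where D(B1 ⊗ B2) is computed in the juxtaposed scenario S1 ⊗ S2. -/
open scoped BigOperators

/-- A probability distribution on a finite type. -/
def IsDist {X : Type} [Fintype X] (f : X → ℝ) : Prop :=
  (∀ x, 0 ≤ f x) ∧ ∑ x, f x = 1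

lemma isDist_prodFun {A B : Type} [Fintype A] [Fintype B] {f : A → ℝ} {g : B → ℝ}
    (hf : IsDist f) (hg : IsDist g) :
    IsDist (fun x : A × B => f x.1 * g x.2) := by
  refine ⟨fun x => mul_nonneg (hf.1 x.1) (hg.1 x.2), ?_⟩
  calc ∑ x : A × B, f x.1 * g x.2 = ∑ a, ∑ b, f a * g b := by
        rw [Fintype.sum_prod_type]
    _ = (∑ a, f a) * (∑ b, g b) := by rw [Finset.sum_mul_sum]
    _ = 1 := by rw [hf.2, hg.2, mul_one]

lemma isDist_prodFun' {K1 J1 K2 J2 : Type} [Fintype K1] [Fintype J1] [Fintype K2] [Fintype J2]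
    {f : K1 × J1 → ℝ} {g : K2 × J2 → ℝ} (hf : IsDist f) (hg : IsDist g) :
    IsDist (fun kj : (K1 × K2) × (J1 × J2) => f (kj.1.1, kj.2.1) * g (kj.1.2, kj.2.2)) := by
  refine ⟨fun kj => mul_nonneg (hf.1 _) (hg.1 _), ?_⟩
  have h := (isDist_prodFun hf hg).2
  rw [← h]
  exact Fintype.sum_equiv (Equiv.prodProdProdComm K1 K2 J1 J2) _ _ (by rintro ⟨⟨a, b⟩, c, d⟩; rfl)

/-- A prepare-and-measure scenario: finite nonempty sets of preparations `I`,
measurements `J` and outcomes `K` (carried as type-class assumptions on the index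
types), together with a family of preparation operational equivalences (pairs of
probability distributions on `I`) and a family of measurement operational
equivalences (pairs of probability distributions on `K × J`). -/
structure Scenario (I J K : Type) [Fintype I] [Fintype J] [Fintype K] where
  PE : Type
  ME : Type
  prepEq : PE → (I → ℝ) × (I → ℝ)
  measEq : ME → (K × J → ℝ) × (K × J → ℝ)
  prep_dist : ∀ s, IsDist (prepEq s).1 ∧ IsDist (prepEq s).2
  meas_dist : ∀ r, IsDist (measEq r).1 ∧ IsDist (measEq r).2

/-- A behavior: a family `p k ∣ j, i` of nonnegative reals, normalized over outcomes. -/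
def IsBehavior {I J K : Type} [Fintype I] [Fintype J] [Fintype K]
    (p : I → J → K → ℝ) : Prop :=
  (∀ i j k, 0 ≤ p i j k) ∧ ∀ i j, ∑ k, p i j k = 1

/-- A behavior is noncontextual in a scenario `S` if it admits a universally
noncontextual ontological model over a finite ontic space. -/
def Noncontextual {I J K : Type} [Fintype I] [Fintype J] [Fintype K]
    (S : Scenario I J K) (p : I → J → K → ℝ) : Prop :=
  ∃ (n : ℕ) (μ : I → Fin n → ℝ) (ξ : Fin n → J → K → ℝ),
    (∀ i, IsDist (μ i)) ∧
    (∀ l j, IsDist (ξ l j)) ∧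
    (∀ i j k, p i j k = ∑ l, ξ l j k * μ i l) ∧
    (∀ s l, ∑ i, ((S.prepEq s).1 i - (S.prepEq s).2 i) * μ i l = 0) ∧
    (∀ r l, ∑ kj : K × J, ((S.measEq r).1 kj - (S.measEq r).2 kj) * ξ l kj.2 kj.1 = 0)

/-- The juxtaposition of two behaviors. -/
def prodBehavior {I1 J1 K1 I2 J2 K2 : Type}
    [Fintype I1] [Fintype J1] [Fintype K1] [Fintype I2] [Fintype J2] [Fintype K2]
    (p1 : I1 → J1 → K1 → ℝ) (p2 : I2 → J2 → K2 → ℝ) :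
    I1 × I2 → J1 × J2 → K1 × K2 → ℝ :=
  fun i j k => p1 i.1 j.1 k.1 * p2 i.2 j.2 k.2

/-- The juxtaposition `S1 ⊗ S2` of two scenarios: preparation (resp. measurement)
equivalences are all pairs `(α ⊗ γ, β ⊗ γ)` with `(α, β)` an equivalence of `S1` and
`γ` an arbitrary distribution on the preparations (resp. measurement events) of `S2`,
together with the symmetric ones coming from `S2`. -/
def Scenario.prod {I1 J1 K1 I2 J2 K2 : Type}
    [Fintype I1] [Fintype J1] [Fintype K1] [Fintype I2] [Fintype J2] [Fintype K2]
    (S1 : Scenario I1 J1 K1) (S2 : Scenario I2 J2 K2) :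
    Scenario (I1 × I2) (J1 × J2) (K1 × K2) where
  PE := (S1.PE × {γ : I2 → ℝ // IsDist γ}) ⊕ (S2.PE × {γ : I1 → ℝ // IsDist γ})
  ME := (S1.ME × {γ : K2 × J2 → ℝ // IsDist γ}) ⊕ (S2.ME × {γ : K1 × J1 → ℝ // IsDist γ})
  prepEq := fun e =>
    match e with
    | Sum.inl (s, γ) =>
        (fun i => (S1.prepEq s).1 i.1 * γ.1 i.2, fun i => (S1.prepEq s).2 i.1 * γ.1 i.2)
    | Sum.inr (s, γ) =>
        (fun i => γ.1 i.1 * (S2.prepEq s).1 i.2, fun i => γ.1 i.1 * (S2.prepEq s).2 i.2)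
  measEq := fun e =>
    match e with
    | Sum.inl (r, γ) =>
        (fun kj => (S1.measEq r).1 (kj.1.1, kj.2.1) * γ.1 (kj.1.2, kj.2.2),
         fun kj => (S1.measEq r).2 (kj.1.1, kj.2.1) * γ.1 (kj.1.2, kj.2.2))
    | Sum.inr (r, γ) =>
        (fun kj => γ.1 (kj.1.1, kj.2.1) * (S2.measEq r).1 (kj.1.2, kj.2.2),
         fun kj => γ.1 (kj.1.1, kj.2.1) * (S2.measEq r).2 (kj.1.2, kj.2.2))
  prep_dist := by
    rintro (⟨s, γ⟩ | ⟨s, γ⟩)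
    · exact ⟨isDist_prodFun (S1.prep_dist s).1 γ.2, isDist_prodFun (S1.prep_dist s).2 γ.2⟩
    · exact ⟨isDist_prodFun γ.2 (S2.prep_dist s).1, isDist_prodFun γ.2 (S2.prep_dist s).2⟩
  meas_dist := by
    rintro (⟨r, γ⟩ | ⟨r, γ⟩)
    · exact ⟨isDist_prodFun' (S1.meas_dist r).1 γ.2, isDist_prodFun' (S1.meas_dist r).2 γ.2⟩
    · exact ⟨isDist_prodFun' γ.2 (S2.meas_dist r).1, isDist_prodFun' γ.2 (S2.meas_dist r).2⟩

/-- A free operation: a pre-processing of preparations, a pre-processing of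
measurement choices and, for each simulated measurement, a post-processing of the
outcomes, all given by stochastic maps. -/
structure FreeOp (I J K I' J' K' : Type)
    [Fintype I] [Fintype J] [Fintype K] [Fintype I'] [Fintype J'] [Fintype K'] where
  qP : I' → I → ℝ
  qM : J' → J → ℝ
  qO : J' → K → K' → ℝ
  qP_dist : ∀ i', IsDist (qP i')
  qM_dist : ∀ j', IsDist (qM j')
  qO_dist : ∀ j' k, IsDist (qO j' k)

/-- Action of a free operation on a behavior. -/
def FreeOp.apply {I J K I' J' K' : Type}
    [Fintype I] [Fintype J] [Fintype K] [Fintype I'] [Fintype J'] [Fintype K']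
    (T : FreeOp I J K I' J' K') (p : I → J → K → ℝ) : I' → J' → K' → ℝ :=
  fun i' j' k' => ∑ i, ∑ j, ∑ k, T.qO j' k k' * p i j k * T.qM j' j * T.qP i' i

/-- `T` lifts the operational equivalences of `S'` to those of `S`. -/
def LiftsEquivalences {I J K I' J' K' : Type}
    [Fintype I] [Fintype J] [Fintype K] [Fintype I'] [Fintype J'] [Fintype K']
    (S : Scenario I J K) (S' : Scenario I' J' K') (T : FreeOp I J K I' J' K') : Prop :=
  (∀ s' : S'.PE, ∃ s : S.PE, ∀ i : I,
      ∑ i' : I', ((S'.prepEq s').1 i' - (S'.prepEq s').2 i') * T.qP i' i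
        = (S.prepEq s).1 i - (S.prepEq s).2 i) ∧
  (∀ r' : S'.ME, ∃ r : S.ME, ∀ k : K, ∀ j : J,
      ∑ kj' : K' × J', ((S'.measEq r').1 kj' - (S'.measEq r').2 kj') *
          (T.qO kj'.2 k kj'.1 * T.qM kj'.2 j)
        = (S.measEq r).1 (k, j) - (S.measEq r).2 (k, j))

/-- The contextual fraction. -/
noncomputable def ctxFraction {I J K : Type} [Fintype I] [Fintype J] [Fintype K]
    (S : Scenario I J K) (p : I → J → K → ℝ) : ℝ :=
  1 - sSup {l : ℝ | 0 ≤ l ∧ l ≤ 1 ∧ ∃ q q' : I → J → K → ℝ,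
      Noncontextual S q ∧ IsBehavior q' ∧
      ∀ i j k, p i j k = l * q i j k + (1 - l) * q' i j k}

/-- The robustness of contextuality. -/
noncomputable def robustness {I J K : Type} [Fintype I] [Fintype J] [Fintype K]
    (S : Scenario I J K) (p : I → J → K → ℝ) : ℝ :=
  sInf {l : ℝ | 0 ≤ l ∧ l ≤ 1 ∧ ∃ q : I → J → K → ℝ, Noncontextual S q ∧
      Noncontextual S (fun i j k => l * q i j k + (1 - l) * p i j k)}

/-- The robustness with respect to a fixed reference behavior. -/
noncomputable def refRobustness {I J K : Type} [Fintype I] [Fintype J] [Fintype K]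
    (S : Scenario I J K) (pref p : I → J → K → ℝ) : ℝ :=
  sInf {l : ℝ | 0 ≤ l ∧ l ≤ 1 ∧
      Noncontextual S (fun i j k => l * pref i j k + (1 - l) * p i j k)}

/-- One term of the Kullback-Leibler divergence, with the conventions
`0 log (0/q) = 0` and `p log (p/0) = ∞` for `p > 0`. -/
noncomputable def klTerm (p q : ℝ) : EReal :=
  if p = 0 then 0 else if q = 0 then ⊤ else ((p * Real.log (p / q) : ℝ) : EReal)

/-- KL divergence between behaviors: maximum over preparations and measurements. -/
noncomputable def DKL {I J K : Type} [Fintype I] [Fintype J] [Fintype K]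
    (p q : I → J → K → ℝ) : EReal :=
  ⨆ i : I, ⨆ j : J, ∑ k : K, klTerm (p i j k) (q i j k)

/-- The relative entropy of contextuality. -/
noncomputable def relEntCtx {I J K : Type} [Fintype I] [Fintype J] [Fintype K]
    (S : Scenario I J K) (p : I → J → K → ℝ) : EReal :=
  ⨅ q ∈ {q : I → J → K → ℝ | Noncontextual S q}, DKL p q

/-- ℓ1 distance between behaviors: maximum over preparations and measurements. -/
noncomputable def D1 {I J K : Type} [Fintype I] [Fintype J] [Fintype K]
    (p q : I → J → K → ℝ) : ℝ :=
  ⨆ ij : I × J, ∑ k : K, |p ij.1 ij.2 k - q ij.1 ij.2 k|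

/-- The ℓ1-contextuality distance. -/
noncomputable def l1CtxDistance {I J K : Type} [Fintype I] [Fintype J] [Fintype K]
    (S : Scenario I J K) (p : I → J → K → ℝ) : ℝ :=
  sInf {d : ℝ | ∃ q : I → J → K → ℝ, Noncontextual S q ∧ D1 p q = d}

/-- The uniform ℓ1-contextuality distance. -/
noncomputable def uniformL1CtxDistance {I J K : Type} [Fintype I] [Fintype J] [Fintype K]
    (S : Scenario I J K) (p : I → J → K → ℝ) : ℝ :=
  (1 / (2 * (Fintype.card I : ℝ) * (Fintype.card J : ℝ))) *
    sInf {d : ℝ | ∃ q : I → J → K → ℝ, Noncontextual S q ∧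
      ∑ i, ∑ j, ∑ k, |p i j k - q i j k| = d}

/-- The measurement-assignment polytope of a scenario. -/
def MAPolytope {I J K : Type} [Fintype I] [Fintype J] [Fintype K]
    (S : Scenario I J K) : Set (K × J → ℝ) :=
  {ξ | (∀ kj, 0 ≤ ξ kj) ∧ (∀ j, ∑ k, ξ (k, j) = 1) ∧
    ∀ r, ∑ kj : K × J, ((S.measEq r).1 kj - (S.measEq r).2 kj) * ξ kj = 0}

/-!
A noncontextual model of `B1` and one of `B2` multiply to a model of `B1 ⊗ B2` on the product
ontic space `Λ1 × Λ2`: every operational equivalence of `S1 ⊗ S2` is of the form `(α ⊗ γ, β ⊗ γ)`,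
so the corresponding constraint factorizes as the constraint of `S1` (or `S2`) times a sum
involving `γ`, and hence vanishes. On the other hand the ℓ1 distance between product behaviors
is subadditive, since `a b - c d = (a - c) d + a (b - d)` and the weights `d` and `a` are
probability distributions.
-/

lemma sum_prod_mul {A B : Type} [Fintype A] [Fintype B] (f : A → ℝ) (g : B → ℝ) :
    ∑ x : A × B, f x.1 * g x.2 = (∑ a, f a) * ∑ b, g b := by
  rw [Fintype.sum_prod_type, Fintype.sum_mul_sum]

lemma sum_prodProdProdComm_mul {K1 J1 K2 J2 : Type}
    [Fintype K1] [Fintype J1] [Fintype K2] [Fintype J2] (f : K1 × J1 → ℝ) (g : K2 × J2 → ℝ) :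
    ∑ kj : (K1 × K2) × (J1 × J2), f (kj.1.1, kj.2.1) * g (kj.1.2, kj.2.2)
      = (∑ a, f a) * ∑ b, g b := by
  rw [← sum_prod_mul, ← (Equiv.prodProdProdComm K1 J1 K2 J2).symm.sum_comp]
  rfl

lemma IsDist.comp_equiv {X Y : Type} [Fintype X] [Fintype Y] {f : Y → ℝ} (hf : IsDist f)
    (e : X ≃ Y) : IsDist (f ∘ e) :=
  ⟨fun x => hf.1 (e x), (e.sum_comp f).trans hf.2⟩

section Model

variable {I J K Λ : Type} [Fintype I] [Fintype J] [Fintype K] [Fintype Λ]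

def IsNoncontextualModel (S : Scenario I J K) (p : I → J → K → ℝ)
    (μ : I → Λ → ℝ) (ξ : Λ → J → K → ℝ) : Prop :=
  (∀ i, IsDist (μ i)) ∧
    (∀ l j, IsDist (ξ l j)) ∧
    (∀ i j k, p i j k = ∑ l, ξ l j k * μ i l) ∧
    (∀ s l, ∑ i, ((S.prepEq s).1 i - (S.prepEq s).2 i) * μ i l = 0) ∧
    (∀ r l, ∑ kj : K × J, ((S.measEq r).1 kj - (S.measEq r).2 kj) * ξ l kj.2 kj.1 = 0)

lemma IsNoncontextualModel.comp_equiv {Λ' : Type} [Fintype Λ'] {S : Scenario I J K}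
    {p : I → J → K → ℝ} {μ : I → Λ → ℝ} {ξ : Λ → J → K → ℝ}
    (h : IsNoncontextualModel S p μ ξ) (e : Λ' ≃ Λ) :
    IsNoncontextualModel S p (fun i => μ i ∘ e) (ξ ∘ e) := by
  obtain ⟨hμ, hξ, hrep, hprep, hmeas⟩ := h
  refine ⟨fun i => (hμ i).comp_equiv e, fun l j => hξ (e l) j, fun i j k => ?_,
    fun s l => hprep s (e l), fun r l => hmeas r (e l)⟩
  rw [hrep]
  exact (e.sum_comp fun l => ξ l j k * μ i l).symm

lemma IsNoncontextualModel.noncontextual {S : Scenario I J K} {p : I → J → K → ℝ}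
    {μ : I → Λ → ℝ} {ξ : Λ → J → K → ℝ} (h : IsNoncontextualModel S p μ ξ) :
    Noncontextual S p :=
  ⟨_, _, _, h.comp_equiv (Fintype.equivFin Λ).symm⟩

lemma IsNoncontextualModel.isBehavior {S : Scenario I J K} {p : I → J → K → ℝ}
    {μ : I → Λ → ℝ} {ξ : Λ → J → K → ℝ} (h : IsNoncontextualModel S p μ ξ) :
    IsBehavior p := by
  obtain ⟨hμ, hξ, hrep, -, -⟩ := h
  refine ⟨fun i j k => ?_, fun i j => ?_⟩
  · rw [hrep]
    exact Finset.sum_nonneg fun l _ => mul_nonneg ((hξ l j).1 k) ((hμ i).1 l)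
  · calc ∑ k, p i j k = ∑ l, (∑ k, ξ l j k) * μ i l := by
          simp only [hrep, Finset.sum_mul]
          exact Finset.sum_comm
      _ = 1 := by simp only [fun l => (hξ l j).2, one_mul, (hμ i).2]

lemma Noncontextual.isBehavior {S : Scenario I J K} {q : I → J → K → ℝ}
    (hq : Noncontextual S q) : IsBehavior q := by
  obtain ⟨n, μ, ξ, h⟩ := hq
  exact IsNoncontextualModel.isBehavior (μ := μ) (ξ := ξ) h

end Model

section Juxtaposition

variable {I1 J1 K1 Λ1 I2 J2 K2 Λ2 : Type}
  [Fintype I1] [Fintype J1] [Fintype K1] [Fintype Λ1]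
  [Fintype I2] [Fintype J2] [Fintype K2] [Fintype Λ2]
  {S1 : Scenario I1 J1 K1} {S2 : Scenario I2 J2 K2}

lemma IsNoncontextualModel.prod {q1 : I1 → J1 → K1 → ℝ} {q2 : I2 → J2 → K2 → ℝ}
    {μ1 : I1 → Λ1 → ℝ} {ξ1 : Λ1 → J1 → K1 → ℝ} {μ2 : I2 → Λ2 → ℝ} {ξ2 : Λ2 → J2 → K2 → ℝ}
    (h1 : IsNoncontextualModel S1 q1 μ1 ξ1) (h2 : IsNoncontextualModel S2 q2 μ2 ξ2) :
    IsNoncontextualModel (S1.prod S2) (prodBehavior q1 q2)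
      (fun i (l : Λ1 × Λ2) => μ1 i.1 l.1 * μ2 i.2 l.2)
      (fun (l : Λ1 × Λ2) j k => ξ1 l.1 j.1 k.1 * ξ2 l.2 j.2 k.2) := by
  obtain ⟨hμ1, hξ1, hrep1, hprep1, hmeas1⟩ := h1
  obtain ⟨hμ2, hξ2, hrep2, hprep2, hmeas2⟩ := h2
  refine ⟨fun i => isDist_prodFun (hμ1 i.1) (hμ2 i.2),
    fun l j => isDist_prodFun (hξ1 l.1 j.1) (hξ2 l.2 j.2), fun i j k => ?_, ?_, ?_⟩
  · rw [prodBehavior, hrep1, hrep2, ← sum_prod_mul]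
    exact Finset.sum_congr rfl fun l _ => by ring
  · rintro (⟨s, γ⟩ | ⟨s, γ⟩) l
    · calc _ = (∑ i1, ((S1.prepEq s).1 i1 - (S1.prepEq s).2 i1) * μ1 i1 l.1) *
              ∑ i2, γ.1 i2 * μ2 i2 l.2 := by
            rw [← sum_prod_mul]
            exact Finset.sum_congr rfl fun i _ => by simp only [Scenario.prod]; ring
        _ = 0 := by rw [hprep1, zero_mul]
    · calc _ = (∑ i1, γ.1 i1 * μ1 i1 l.1) *
              ∑ i2, ((S2.prepEq s).1 i2 - (S2.prepEq s).2 i2) * μ2 i2 l.2 := by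
            rw [← sum_prod_mul]
            exact Finset.sum_congr rfl fun i _ => by simp only [Scenario.prod]; ring
        _ = 0 := by rw [hprep2, mul_zero]
  · rintro (⟨r, γ⟩ | ⟨r, γ⟩) l
    · calc _ = (∑ a, ((S1.measEq r).1 a - (S1.measEq r).2 a) * ξ1 l.1 a.2 a.1) *
              ∑ b, γ.1 b * ξ2 l.2 b.2 b.1 := by
            rw [← sum_prodProdProdComm_mul]
            exact Finset.sum_congr rfl fun kj _ => by simp only [Scenario.prod]; ring
        _ = 0 := by rw [hmeas1, zero_mul]
    · calc _ = (∑ a, γ.1 a * ξ1 l.1 a.2 a.1) *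
              ∑ b, ((S2.measEq r).1 b - (S2.measEq r).2 b) * ξ2 l.2 b.2 b.1 := by
            rw [← sum_prodProdProdComm_mul]
            exact Finset.sum_congr rfl fun kj _ => by simp only [Scenario.prod]; ring
        _ = 0 := by rw [hmeas2, mul_zero]

lemma Noncontextual.prod {q1 : I1 → J1 → K1 → ℝ} {q2 : I2 → J2 → K2 → ℝ}
    (hq1 : Noncontextual S1 q1) (hq2 : Noncontextual S2 q2) :
    Noncontextual (S1.prod S2) (prodBehavior q1 q2) := by
  obtain ⟨n1, μ1, ξ1, h1⟩ := hq1
  obtain ⟨n2, μ2, ξ2, h2⟩ := hq2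
  exact (IsNoncontextualModel.prod (μ1 := μ1) (ξ1 := ξ1) (μ2 := μ2) (ξ2 := ξ2) h1 h2).noncontextual

end Juxtaposition

lemma abs_mul_sub_mul_le {a b c d : ℝ} (ha : 0 ≤ a) (hd : 0 ≤ d) :
    |a * b - c * d| ≤ |a - c| * d + a * |b - d| :=
  calc |a * b - c * d| = |(a - c) * d + a * (b - d)| := by ring_nf
    _ ≤ |(a - c) * d| + |a * (b - d)| := abs_add_le _ _
    _ = |a - c| * d + a * |b - d| := by rw [abs_mul, abs_mul, abs_of_nonneg hd, abs_of_nonneg ha]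

lemma sum_abs_mul_sub_mul_le {A B : Type} [Fintype A] [Fintype B] {f g : A → ℝ} {f' g' : B → ℝ}
    (hf : IsDist f) (hg' : IsDist g') :
    ∑ x : A × B, |f x.1 * f' x.2 - g x.1 * g' x.2|
      ≤ ∑ a, |f a - g a| + ∑ b, |f' b - g' b| :=
  calc ∑ x : A × B, |f x.1 * f' x.2 - g x.1 * g' x.2|
      ≤ ∑ x : A × B, (|f x.1 - g x.1| * g' x.2 + f x.1 * |f' x.2 - g' x.2|) :=
        Finset.sum_le_sum fun x _ => abs_mul_sub_mul_le (hf.1 x.1) (hg'.1 x.2)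
    _ = (∑ a, |f a - g a|) * (∑ b, g' b) + (∑ a, f a) * ∑ b, |f' b - g' b| := by
        rw [Finset.sum_add_distrib, ← sum_prod_mul, ← sum_prod_mul]
    _ = ∑ a, |f a - g a| + ∑ b, |f' b - g' b| := by rw [hg'.2, hf.2, mul_one, one_mul]

section Distance

variable {I J K : Type} [Fintype I] [Fintype J] [Fintype K]

lemma D1_nonneg (p q : I → J → K → ℝ) : 0 ≤ D1 p q :=
  Real.iSup_nonneg fun _ => Finset.sum_nonneg fun _ _ => abs_nonneg _

lemma sum_abs_sub_le_D1 (p q : I → J → K → ℝ) (i : I) (j : J) :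
    ∑ k, |p i j k - q i j k| ≤ D1 p q :=
  le_ciSup (f := fun ij : I × J => ∑ k, |p ij.1 ij.2 k - q ij.1 ij.2 k|)
    (Set.finite_range _).bddAbove (i, j)

lemma l1CtxDistance_le_D1 {S : Scenario I J K} (p : I → J → K → ℝ) {q : I → J → K → ℝ}
    (hq : Noncontextual S q) : l1CtxDistance S p ≤ D1 p q :=
  csInf_le ⟨0, by rintro _ ⟨q', -, rfl⟩; exact D1_nonneg p q'⟩ ⟨q, hq, rfl⟩

lemma exists_noncontextual_D1_lt {S : Scenario I J K} (p : I → J → K → ℝ)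
    (hS : {q : I → J → K → ℝ | Noncontextual S q}.Nonempty) {ε : ℝ} (hε : 0 < ε) :
    ∃ q, Noncontextual S q ∧ D1 p q < l1CtxDistance S p + ε := by
  obtain ⟨q, hq⟩ := hS
  obtain ⟨_, ⟨q', hq', rfl⟩, hlt⟩ :=
    Real.lt_sInf_add_pos (s := {d | ∃ q, Noncontextual S q ∧ D1 p q = d}) ⟨_, q, hq, rfl⟩ hε
  exact ⟨q', hq', hlt⟩

end Distance

lemma D1_prodBehavior_le {I1 J1 K1 I2 J2 K2 : Type}
    [Fintype I1] [Fintype J1] [Fintype K1] [Fintype I2] [Fintype J2] [Fintype K2]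
    {p1 q1 : I1 → J1 → K1 → ℝ} {p2 q2 : I2 → J2 → K2 → ℝ}
    (hp1 : IsBehavior p1) (hq2 : IsBehavior q2) :
    D1 (prodBehavior p1 p2) (prodBehavior q1 q2) ≤ D1 p1 q1 + D1 p2 q2 :=
  Real.iSup_le (fun ij =>
      (sum_abs_mul_sub_mul_le ⟨hp1.1 ij.1.1 ij.2.1, hp1.2 ij.1.1 ij.2.1⟩
          ⟨hq2.1 ij.1.2 ij.2.2, hq2.2 ij.1.2 ij.2.2⟩).trans
        (add_le_add (sum_abs_sub_le_D1 _ _ _ _) (sum_abs_sub_le_D1 _ _ _ _)))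
    (add_nonneg (D1_nonneg _ _) (D1_nonneg _ _))

theorem l1CtxDistance_subadditive_general
    {I1 J1 K1 I2 J2 K2 : Type}
    [Fintype I1] [Fintype J1] [Fintype K1] [Fintype I2] [Fintype J2] [Fintype K2]
    (S1 : Scenario I1 J1 K1) (S2 : Scenario I2 J2 K2)
    (p1 : I1 → J1 → K1 → ℝ) (p2 : I2 → J2 → K2 → ℝ)
    (hp1 : IsBehavior p1)
    (h1 : {q : I1 → J1 → K1 → ℝ | Noncontextual S1 q}.Nonempty)
    (h2 : {q : I2 → J2 → K2 → ℝ | Noncontextual S2 q}.Nonempty) :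
    l1CtxDistance (S1.prod S2) (prodBehavior p1 p2)
      ≤ l1CtxDistance S1 p1 + l1CtxDistance S2 p2 := by
  refine le_of_forall_pos_lt_add fun ε hε => ?_
  obtain ⟨q1, hq1, hd1⟩ := exists_noncontextual_D1_lt p1 h1 (half_pos hε)
  obtain ⟨q2, hq2, hd2⟩ := exists_noncontextual_D1_lt p2 h2 (half_pos hε)
  calc l1CtxDistance (S1.prod S2) (prodBehavior p1 p2)
      ≤ D1 (prodBehavior p1 p2) (prodBehavior q1 q2) := l1CtxDistance_le_D1 _ (hq1.prod hq2)
    _ ≤ D1 p1 q1 + D1 p2 q2 := D1_prodBehavior_le hp1 hq2.isBehavior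
    _ < l1CtxDistance S1 p1 + l1CtxDistance S2 p2 + ε := by linarith

/-- the ℓ1-contextuality distance is subadditive under independent
juxtapositions. -/
theorem l1CtxDistance_subadditive
    {I1 J1 K1 I2 J2 K2 : Type}
    [Fintype I1] [Fintype J1] [Fintype K1] [Fintype I2] [Fintype J2] [Fintype K2]
    [Nonempty I1] [Nonempty J1] [Nonempty K1] [Nonempty I2] [Nonempty J2] [Nonempty K2]
    (S1 : Scenario I1 J1 K1) (S2 : Scenario I2 J2 K2)
    (p1 : I1 → J1 → K1 → ℝ) (p2 : I2 → J2 → K2 → ℝ)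
    (hp1 : IsBehavior p1) (hp2 : IsBehavior p2)
    (h1 : {q : I1 → J1 → K1 → ℝ | Noncontextual S1 q}.Nonempty)
    (h2 : {q : I2 → J2 → K2 → ℝ | Noncontextual S2 q}.Nonempty)
    (h12 : {q : I1 × I2 → J1 × J2 → K1 × K2 → ℝ |
        Noncontextual (S1.prod S2) q}.Nonempty) :
    l1CtxDistance (S1.prod S2) (prodBehavior p1 p2)
      ≤ l1CtxDistance S1 p1 + l1CtxDistance S2 p2 :=
  l1CtxDistance_subadditive_general S1 S2 p1 p2 hp1 h1 h2
end

section
/- Linear (vertex) characterization of the noncontextual set: for a scenario S, let V denote the (finite) set of extreme points ξ̃(κ), κ ∈ V, of the measurement-assignment polytope of S. A behavior B = {p(k|j,i)} in S is noncontextual in S if and only if there exist probability distributions μ_i on V, one for each i ∈ I, such that ∑_{i∈I} (α^s_i − β^s_i) μ_i(κ) = 0 for every preparation equivalence s and every κ ∈ V, and ∑_{κ∈V} ξ̃_{k|j}(κ) μ_i(κ) = p(k|j,i) for all i ∈ I, j ∈ J, k ∈ K. -/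
open scoped BigOperators

/-
The measurement-assignment polytope is compact and convex, so by Krein–Milman it is the convex
hull of its finitely many vertices. The response function of every ontic state of a
noncontextual model lies in the polytope and is therefore a mixture of vertices; pushing each
preparation distribution forward along these mixtures gives distributions over the vertices, and
linearity preserves both the preparation equivalences and the predictions. Conversely, the
vertices can serve as ontic states acting as their own response functions: lying in the
polytope, they respect the measurement equivalences.
-/

open Finset

section Polytope

variable {I J K : Type} [Fintype I] [Fintype J] [Fintype K]

lemma convex_MAPolytope (S : Scenario I J K) : Convex ℝ (MAPolytope S) := by
  rintro x ⟨hx0, hx1, hx2⟩ y ⟨hy0, hy1, hy2⟩ a b ha hb hab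
  refine ⟨fun kj => add_nonneg (mul_nonneg ha (hx0 kj)) (mul_nonneg hb (hy0 kj)),
    fun j => ?_, fun r => ?_⟩
  · simp only [Pi.add_apply, Pi.smul_apply, smul_eq_mul, sum_add_distrib, ← mul_sum, hx1,
      hy1, mul_one, hab]
  · simp only [Pi.add_apply, Pi.smul_apply, smul_eq_mul, mul_add, sum_add_distrib,
      mul_left_comm _ a, mul_left_comm _ b, ← mul_sum, hx2, hy2, mul_zero, add_zero]

lemma isClosed_MAPolytope (S : Scenario I J K) : IsClosed (MAPolytope S) := by
  simp only [MAPolytope, Set.ofPred_and, Set.ofPred_forall]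
  refine (isClosed_iInter fun kj => isClosed_le continuous_const (continuous_apply kj)).inter
    ((isClosed_iInter fun j => isClosed_eq ?_ continuous_const).inter
      (isClosed_iInter fun r => isClosed_eq ?_ continuous_const)) <;> fun_prop

lemma MAPolytope_subset_Icc (S : Scenario I J K) : MAPolytope S ⊆ Set.Icc 0 1 :=
  fun ξ ⟨h0, h1, _⟩ => ⟨h0, fun kj =>
    calc ξ kj ≤ ∑ k, ξ (k, kj.2) := single_le_sum (fun k _ => h0 (k, kj.2)) (mem_univ kj.1)
      _ = 1 := h1 kj.2⟩

lemma isCompact_MAPolytope (S : Scenario I J K) : IsCompact (MAPolytope S) :=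
  isCompact_Icc.of_isClosed_subset (isClosed_MAPolytope S) (MAPolytope_subset_Icc S)

end Polytope

theorem convexHull_extremePoints_eq_of_finite {E : Type*} [AddCommGroup E] [Module ℝ E]
    [TopologicalSpace E] [T2Space E] [IsTopologicalAddGroup E] [ContinuousSMul ℝ E]
    [LocallyConvexSpace ℝ E] {s : Set E} (hs : IsCompact s) (hconv : Convex ℝ s)
    (hfin : (s.extremePoints ℝ).Finite) : convexHull ℝ (s.extremePoints ℝ) = s := by
  rw [← (hfin.isCompact_convexHull ℝ).isClosed.closure_eq]
  exact closure_convexHull_extremePoints hs hconv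

section Model

variable {I J K : Type} [Fintype I] [Fintype J] [Fintype K]

/-- A noncontextual model whose ontic states are the points `v ∈ t`, each acting as its own
response function `v (k, j)`. -/
def IsModelOn (S : Scenario I J K) (p : I → J → K → ℝ) (t : Finset (K × J → ℝ))
    (μ : I → (K × J → ℝ) → ℝ) : Prop :=
  (∀ i, (∀ v ∈ t, 0 ≤ μ i v) ∧ ∑ v ∈ t, μ i v = 1) ∧
  (∀ s : S.PE, ∀ v ∈ t, ∑ i, ((S.prepEq s).1 i - (S.prepEq s).2 i) * μ i v = 0) ∧
  (∀ i j k, ∑ v ∈ t, v (k, j) * μ i v = p i j k)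

theorem Noncontextual.exists_isModelOn {S : Scenario I J K} {p : I → J → K → ℝ}
    (hp : Noncontextual S p) {t : Finset (K × J → ℝ)}
    (ht : MAPolytope S ⊆ convexHull ℝ t) : ∃ μ, IsModelOn S p t μ := by
  obtain ⟨n, μ, ξ, hμ, hξ, hrep, hprep, hmeas⟩ := hp
  have hmem (l : Fin n) : (fun kj : K × J => ξ l kj.2 kj.1) ∈ MAPolytope S :=
    ⟨fun kj => (hξ l kj.2).1 kj.1, fun j => (hξ l j).2, fun r => hmeas r l⟩
  choose w hw0 hw1 hwξ using fun l => mem_convexHull'.mp (ht (hmem l))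
  have hξw (l : Fin n) (j : J) (k : K) : ∑ v ∈ t, w l v * v (k, j) = ξ l j k := by
    simpa only [Finset.sum_apply, Pi.smul_apply, smul_eq_mul] using congrFun (hwξ l) (k, j)
  refine ⟨fun i v => ∑ l, w l v * μ i l, fun i => ⟨fun v hv => ?_, ?_⟩, fun s v _ => ?_,
    fun i j k => ?_⟩
  · exact sum_nonneg fun l _ => mul_nonneg (hw0 l v hv) ((hμ i).1 l)
  · simp only [sum_comm (s := t), ← sum_mul, hw1, one_mul, (hμ i).2]
  · calc _ = ∑ l, w l v * ∑ i, ((S.prepEq s).1 i - (S.prepEq s).2 i) * μ i l := by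
          simp only [mul_sum]
          exact sum_comm.trans (sum_congr rfl fun _ _ => sum_congr rfl fun _ _ => by ring)
      _ = 0 := by simp only [hprep, mul_zero, sum_const_zero]
  · calc _ = ∑ l, (∑ v ∈ t, w l v * v (k, j)) * μ i l := by
          simp only [mul_sum, sum_mul]
          exact sum_comm.trans (sum_congr rfl fun _ _ => sum_congr rfl fun _ _ => by ring)
      _ = p i j k := by simp only [hξw, hrep]

theorem IsModelOn.noncontextual {S : Scenario I J K} {p : I → J → K → ℝ}
    {t : Finset (K × J → ℝ)} {μ : I → (K × J → ℝ) → ℝ} (hμ : IsModelOn S p t μ)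
    (ht : ↑t ⊆ MAPolytope S) : Noncontextual S p := by
  obtain ⟨hdist, hprep, hrep⟩ := hμ
  let e : Fin t.card ≃ t := t.equivFin.symm
  have hsum (f : (K × J → ℝ) → ℝ) : ∑ l, f (e l) = ∑ v ∈ t, f v :=
    (e.sum_comp (fun v => f v)).trans (sum_coe_sort t f)
  have hmem (l : Fin t.card) : (e l : K × J → ℝ) ∈ MAPolytope S := ht (e l).2
  refine ⟨t.card, fun i l => μ i (e l), fun l j k => (e l : K × J → ℝ) (k, j),
    fun i => ⟨fun l => (hdist i).1 _ (e l).2, (hsum _).trans (hdist i).2⟩,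
    fun l j => ⟨fun k => (hmem l).1 (k, j), (hmem l).2.1 j⟩,
    fun i j k => ((hsum _).trans (hrep i j k)).symm, fun s l => hprep s _ (e l).2,
    fun r l => (hmem l).2.2 r⟩

end Model

theorem noncontextual_iff_vertex_decomposition_general
    {I J K : Type} [Fintype I] [Fintype J] [Fintype K]
    (S : Scenario I J K) (p : I → J → K → ℝ)
    (hV : (Set.extremePoints ℝ (MAPolytope S)).Finite) :
    Noncontextual S p ↔
      ∃ μ : I → (K × J → ℝ) → ℝ,
        (∀ i, (∀ v ∈ hV.toFinset, 0 ≤ μ i v) ∧ ∑ v ∈ hV.toFinset, μ i v = 1) ∧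
        (∀ s : S.PE, ∀ v ∈ hV.toFinset,
          ∑ i, ((S.prepEq s).1 i - (S.prepEq s).2 i) * μ i v = 0) ∧
        (∀ i j k, ∑ v ∈ hV.toFinset, v (k, j) * μ i v = p i j k) := by
  have hhull : convexHull ℝ ↑hV.toFinset = MAPolytope S := by
    rw [hV.coe_toFinset]
    exact convexHull_extremePoints_eq_of_finite (isCompact_MAPolytope S)
      (convex_MAPolytope S) hV
  refine ⟨fun h => h.exists_isModelOn hhull.ge, fun ⟨μ, hμ⟩ => IsModelOn.noncontextual hμ ?_⟩
  rw [hV.coe_toFinset]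
  exact extremePoints_subset

/-- linear (vertex) characterization of the noncontextual set via the
extreme points of the measurement-assignment polytope. -/
theorem noncontextual_iff_vertex_decomposition
    {I J K : Type} [Fintype I] [Fintype J] [Fintype K]
    [Nonempty I] [Nonempty J] [Nonempty K]
    (S : Scenario I J K) (p : I → J → K → ℝ) (hp : IsBehavior p)
    (hV : (Set.extremePoints ℝ (MAPolytope S)).Finite) :
    Noncontextual S p ↔
      ∃ μ : I → (K × J → ℝ) → ℝ,
        (∀ i, (∀ v ∈ hV.toFinset, 0 ≤ μ i v) ∧ ∑ v ∈ hV.toFinset, μ i v = 1) ∧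
        (∀ s : S.PE, ∀ v ∈ hV.toFinset,
          ∑ i, ((S.prepEq s).1 i - (S.prepEq s).2 i) * μ i v = 0) ∧
        (∀ i j k, ∑ v ∈ hV.toFinset, v (k, j) * μ i v = p i j k) :=
  noncontextual_iff_vertex_decomposition_general S p hV
end
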